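/- arXiv:1603.06527 — 3 statements merged into one kernel-verified Lean document; each statement's English description precedes it below -/
import Mathlib

section
/- For any nonnegative integer d, any prime power q (or more generally any element q of a commutative ring), and any indeterminate y, the identity y^d = \sum_{j=0}^{d} q^{j^2} \binom{d}{j}_q \prod_{i=j+1}^{d} (y - q^i) holds, where \binom{d}{j}_q denotes the Gaussian (q-)binomial coefficient. -/
/-!
Generalize the identity by shifting every exponent `q ^ i` in the product to `q ^ (i + n)` and
weighting the `j`-th term by `q ^ (n * j)`, then induct on `d` for all shifts `n` at once.
The q-Pascal rule `[d+1, j+1] = [d, j] + q^(j+1) [d, j+1]` splits the `(j+1)`-st term at level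
`d + 1` into `y` times the `j`-th term at level `d` with shift `n + 1`, plus a telescoping
difference whose boundary terms cancel the `j = 0` term.
-/

open Finset

/-- The Gaussian binomial coefficient `[d choose j]_q`, defined via the q-Pascal recursion. -/
def qb {R : Type*} [CommRing R] (q : R) : ℕ → ℕ → R
  | _, 0 => 1
  | 0, _ + 1 => 0
  | n + 1, k + 1 => qb q n k + q ^ (k + 1) * qb q n (k + 1)

lemma Finset.prod_Icc_add_one_add_one {M : Type*} [CommMonoid M] (f : ℕ → M) (a b : ℕ) :
    ∏ i ∈ Icc (a + 1) (b + 1), f i = ∏ i ∈ Icc a b, f (i + 1) := by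
  rw [← map_add_right_Icc, prod_map]
  rfl

section

variable {R : Type*} [CommRing R]

@[simp]
lemma qb_zero_right (q : R) (n : ℕ) : qb q n 0 = 1 := by
  cases n <;> rfl

lemma qb_eq_zero_of_lt (q : R) : ∀ {n k : ℕ}, n < k → qb q n k = 0
  | 0, _ + 1, _ => rfl
  | n + 1, k + 1, h => by
    rw [qb, qb_eq_zero_of_lt q (by omega), qb_eq_zero_of_lt q (by omega), mul_zero, add_zero]

theorem sum_qb_mul_prod_sub_pow_add (q y : R) (d n : ℕ) :
    ∑ j ∈ range (d + 1), q ^ (j ^ 2 + n * j) * qb q d j *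
      ∏ i ∈ Icc (j + 1) d, (y - q ^ (i + n)) = y ^ d := by
  induction d generalizing n with
  | zero => simp
  | succ d ih =>
    let P (j : ℕ) : R := ∏ i ∈ Icc j (d + 1), (y - q ^ (i + n))
    let g (j : ℕ) : R := q ^ (j ^ 2 + j + n * j) * qb q d j * P (j + 1)
    have hshift (j : ℕ) : P (j + 1 + 1) = ∏ i ∈ Icc (j + 1) d, (y - q ^ (i + (n + 1))) := by
      dsimp only [P]
      rw [prod_Icc_add_one_add_one]
      simp only [add_right_comm _ 1 n, add_assoc]
    have hpeel (j : ℕ) (hj : j ≤ d) : P (j + 1) = (y - q ^ (j + 1 + n)) * P (j + 1 + 1) := by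
      dsimp only [P]
      rw [← mul_prod_Ioc_eq_prod_Icc (by omega : j + 1 ≤ d + 1), Icc_add_one_left_eq_Ioc]
    have hterm (j : ℕ) (hj : j ∈ range (d + 1)) :
        q ^ ((j + 1) ^ 2 + n * (j + 1)) * qb q (d + 1) (j + 1) * P (j + 1 + 1) =
          y * (q ^ (j ^ 2 + (n + 1) * j) * qb q d j *
            ∏ i ∈ Icc (j + 1) d, (y - q ^ (i + (n + 1)))) + (g (j + 1) - g j) := by
      simp only [g, qb, hpeel j (mem_range_succ_iff.mp hj), ← hshift]
      ring
    have hg_last : g (d + 1) = 0 := by simp [g, qb_eq_zero_of_lt q (Nat.lt_succ_self d)]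
    calc ∑ j ∈ range (d + 1 + 1), q ^ (j ^ 2 + n * j) * qb q (d + 1) j * P (j + 1)
        = ∑ j ∈ range (d + 1), q ^ ((j + 1) ^ 2 + n * (j + 1)) * qb q (d + 1) (j + 1) *
            P (j + 1 + 1) + P 1 := by simp [sum_range_succ']
      _ = y * y ^ d + (g (d + 1) - g 0) + P 1 := by
        rw [sum_congr rfl hterm, sum_add_distrib, ← mul_sum, ih, sum_range_sub]
      _ = y ^ (d + 1) := by rw [hg_last, pow_succ']; simp [g]

end

theorem stmt0 {R : Type*} [CommRing R] (q y : R) (d : ℕ) :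
    y ^ d = ∑ j ∈ range (d + 1), q ^ (j ^ 2) * qb q d j * ∏ i ∈ Icc (j + 1) d, (y - q ^ i) := by
  simpa using (sum_qb_mul_prod_sub_pow_add q y d 0).symm
end

section
/- Let F be a finite field with q elements and n a positive integer. The number of nilpotent matrices in M_n(F) is q^{n(n-1)} = q^{n^2 - n}. -/
/-!
Fitting's lemma splits an endomorphism `f` of `V = F^n` into a nilpotent map on `ker f^n` and an
automorphism of `range f^n`; conversely every nilpotent map on `U` and automorphism of `W`, for a
complementary pair `(U, W)`, glue to a unique `f` with these Fitting components. Counting `End V`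
this way gives `q^(n^2) = ∑ₖ Pₖ Nₖ |GL_(n-k)|`, where `Pₖ` counts complementary pairs with
`dim U = k` and `Nₖ` counts nilpotent `k × k` matrices. Splitting ordered bases into their first `k`
and last `n - k` vectors gives `Pₖ |GLₖ| |GL_(n-k)| = |GLₙ|`, and with it a `q`-identity shows that
`q^(k(k-1))` satisfies the same recursion. Since `Pₙ = 1`, the recursion determines `Nₙ`.
-/

open Module

section GLCard

open Finset

def glCard (q m : ℕ) : ℕ := ∏ i : Fin m, (q ^ m - q ^ (i : ℕ))

@[simp] lemma glCard_zero (q : ℕ) : glCard q 0 = 1 := rfl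

lemma glCard_pos {q : ℕ} (hq : 2 ≤ q) (m : ℕ) : 0 < glCard q m :=
  prod_pos fun i _ => Nat.sub_pos_of_lt (Nat.pow_lt_pow_right hq i.2)

lemma glCard_succ (q m : ℕ) : glCard q (m + 1) = q ^ m * (q ^ (m + 1) - 1) * glCard q m := by
  simp only [glCard, Fin.prod_univ_succ, Fin.val_zero, pow_zero, Fin.val_succ]
  have h (i : Fin m) : q ^ (m + 1) - q ^ ((i : ℕ) + 1) = q * (q ^ m - q ^ (i : ℕ)) := by
    rw [mul_tsub, pow_succ', pow_succ']
  rw [prod_congr rfl fun i _ => h i, prod_mul_distrib, prod_const, card_univ, Fintype.card_fin]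
  ring

lemma glCard_mul_sum_pow_div_glCard {q : ℕ} (hq : 2 ≤ q) (n : ℕ) :
    (glCard q n : ℚ) * ∑ k ∈ range (n + 1), (q : ℚ) ^ (k * (k - 1)) / glCard q k =
      (q : ℚ) ^ (n * n) := by
  induction n with
  | zero => simp
  | succ n ih =>
    have hG : (glCard q (n + 1) : ℚ) ≠ 0 := by exact_mod_cast (glCard_pos hq _).ne'
    have hq1 : 1 ≤ q ^ (n + 1) := Nat.one_le_pow _ _ (by omega)
    rw [sum_range_succ, mul_add, mul_div_cancel₀ _ hG, glCard_succ, Nat.cast_mul, mul_assoc, ih]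
    push_cast [Nat.cast_mul, Nat.cast_sub hq1, Nat.cast_pow]
    rw [show (n + 1) * (n + 1) = n * n + n + (n + 1) by ring,
      show (n + 1) * n = n * n + n by ring]
    simp only [pow_add]
    ring

end GLCard

section Block

open LinearMap

variable {R M : Type*} [Ring R] [AddCommGroup M] [Module R M] {U W : Submodule R M}

lemma mapsTo_ker_pow (f : End R M) (m : ℕ) : ∀ x ∈ ker (f ^ m), f x ∈ ker (f ^ m) :=
  fun x hx => by
    rw [mem_ker] at hx ⊢
    rw [← End.mul_apply, ← pow_succ, pow_succ', End.mul_apply, hx, map_zero]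

lemma mapsTo_range_pow (f : End R M) (m : ℕ) : ∀ x ∈ range (f ^ m), f x ∈ range (f ^ m) := by
  rintro _ ⟨y, rfl⟩
  exact ⟨f y, by rw [← End.mul_apply, ← pow_succ, pow_succ', End.mul_apply]⟩

variable (hc : IsCompl U W)

noncomputable def blockEnd (g : End R U) (h : End R W) : End R M :=
  ofIsCompl hc (U.subtype ∘ₗ g) (W.subtype ∘ₗ h)

@[simp] lemma blockEnd_apply_left (g : End R U) (h : End R W) (u : U) :
    blockEnd hc g h u = g u :=
  ofIsCompl_apply_left hc u

@[simp] lemma blockEnd_apply_right (g : End R U) (h : End R W) (w : W) :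
    blockEnd hc g h w = h w :=
  ofIsCompl_apply_right hc w

lemma blockEnd_pow (g : End R U) (h : End R W) (m : ℕ) :
    blockEnd hc g h ^ m = blockEnd hc (g ^ m) (h ^ m) := by
  induction m with
  | zero => exact (ofIsCompl_eq hc (by simp) (by simp)).symm
  | succ m ih =>
    rw [pow_succ, ih]
    exact (ofIsCompl_eq hc (by simp [pow_succ]) (by simp [pow_succ])).symm

lemma blockEnd_restrict (f : End R M) (hU : ∀ x ∈ U, f x ∈ U) (hW : ∀ x ∈ W, f x ∈ W) :
    blockEnd hc (f.restrict hU) (f.restrict hW) = f :=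
  ofIsCompl_eq hc (fun _ => rfl) (fun _ => rfl)

lemma restrict_blockEnd_left (g : End R U) (h : End R W)
    (hU : ∀ x ∈ U, blockEnd hc g h x ∈ U) : (blockEnd hc g h).restrict hU = g :=
  LinearMap.ext fun u => Subtype.ext (blockEnd_apply_left hc g h u)

lemma restrict_blockEnd_right (g : End R U) (h : End R W)
    (hW : ∀ x ∈ W, blockEnd hc g h x ∈ W) : (blockEnd hc g h).restrict hW = h :=
  LinearMap.ext fun w => Subtype.ext (blockEnd_apply_right hc g h w)

lemma ker_blockEnd_zero {h : End R W} (hh : Function.Injective h) :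
    ker (blockEnd hc 0 h) = U := by
  refine le_antisymm (fun x hx => ?_) fun u hu => by simpa using blockEnd_apply_left hc 0 h ⟨u, hu⟩
  obtain ⟨u, w, rfl, -⟩ := Submodule.existsUnique_add_of_isCompl hc x
  have hw : h w = 0 := by
    simpa [mem_ker] using hx
  simp [hh (hw.trans (map_zero h).symm)]

lemma range_blockEnd_zero {h : End R W} (hh : Function.Surjective h) :
    range (blockEnd hc 0 h) = W := by
  rw [blockEnd, range_ofIsCompl, range_comp, range_comp, range_eq_top.2 hh]
  simp

end Block

section Fitting

open LinearMap

variable {K V : Type*} [Field K] [AddCommGroup V] [Module K V]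

/-- `d = dim V` is large enough for the kernels and ranges of the powers of `f` to have
stabilised. -/
noncomputable def fittingPair (f : End K V) : Submodule K V × Submodule K V :=
  (ker (f ^ finrank K V), range (f ^ finrank K V))

lemma isCompl_fittingPair [FiniteDimensional K V] (f : End K V) :
    IsCompl (fittingPair f).1 (fittingPair f).2 := by
  rw [Submodule.isCompl_iff_disjoint _ _
      (by rw [add_comm]; exact (finrank_range_add_finrank_ker _).ge), Submodule.disjoint_def]
  rintro _ hx ⟨y, rfl⟩
  have hy : y ∈ ker (f ^ (finrank K V + finrank K V)) := by
    rwa [mem_ker, pow_add, End.mul_apply]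
  rwa [End.ker_pow_eq_ker_pow_finrank_of_le (by omega)] at hy

lemma pow_finrank_eq_zero_of_isNilpotent [FiniteDimensional K V] {g : End K V}
    (hg : IsNilpotent g) : g ^ finrank K V = 0 := by
  simpa [hg.charpoly_eq_X_pow_finrank] using g.aeval_self_charpoly

variable {U W : Submodule K V} {f : End K V}

lemma mapsTo_left_of_fittingPair_eq (hf : fittingPair f = (U, W)) : ∀ x ∈ U, f x ∈ U := by
  obtain ⟨rfl, -⟩ := Prod.ext_iff.1 hf
  exact mapsTo_ker_pow f _

lemma mapsTo_right_of_fittingPair_eq (hf : fittingPair f = (U, W)) : ∀ x ∈ W, f x ∈ W := by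
  obtain ⟨-, rfl⟩ := Prod.ext_iff.1 hf
  exact mapsTo_range_pow f _

lemma isNilpotent_restrict_of_fittingPair_eq (hf : fittingPair f = (U, W)) :
    IsNilpotent (f.restrict (mapsTo_left_of_fittingPair_eq hf)) := by
  obtain ⟨rfl, -⟩ := Prod.ext_iff.1 hf
  refine ⟨finrank K V, LinearMap.ext fun x => Subtype.ext ?_⟩
  rw [End.pow_restrict, coe_restrict_apply]
  exact x.2

lemma isUnit_restrict_of_fittingPair_eq [FiniteDimensional K V] (hf : fittingPair f = (U, W)) :
    IsUnit (f.restrict (mapsTo_right_of_fittingPair_eq hf)) := by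
  have hc := isCompl_fittingPair f
  obtain ⟨-, rfl⟩ := Prod.ext_iff.1 hf
  rw [LinearMap.isUnit_iff_ker_eq_bot, eq_bot_iff]
  intro x hx
  have hfx : (x : V) ∈ ker (f ^ 1) := by
    simpa [Subtype.ext_iff] using hx
  exact Subtype.ext (Submodule.disjoint_def.1 hc.disjoint _
    (End.ker_pow_le_ker_pow_finrank f 1 hfx) x.2)

lemma fittingPair_blockEnd [FiniteDimensional K V] (hc : IsCompl U W) {g : End K U}
    {h : End K W} (hg : IsNilpotent g) (hh : IsUnit h) : fittingPair (blockEnd hc g h) = (U, W) := by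
  have hgd : g ^ finrank K V = 0 :=
    pow_eq_zero_of_le (Submodule.finrank_le U) (pow_finrank_eq_zero_of_isNilpotent hg)
  have hhd := (End.isUnit_iff _).1 (hh.pow (finrank K V))
  rw [fittingPair, blockEnd_pow, hgd, ker_blockEnd_zero hc hhd.1, range_blockEnd_zero hc hhd.2]

noncomputable def fittingFiberEquiv [FiniteDimensional K V] (hc : IsCompl U W) :
    {f : End K V // fittingPair f = (U, W)} ≃ {g : End K U // IsNilpotent g} × (End K W)ˣ where
  toFun f := (⟨_, isNilpotent_restrict_of_fittingPair_eq f.2⟩,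
    (isUnit_restrict_of_fittingPair_eq f.2).unit)
  invFun p := ⟨blockEnd hc p.1 p.2, fittingPair_blockEnd hc p.1.2 p.2.isUnit⟩
  left_inv f := Subtype.ext (blockEnd_restrict hc f.1 (mapsTo_left_of_fittingPair_eq f.2)
    (mapsTo_right_of_fittingPair_eq f.2))
  right_inv p := Prod.ext (Subtype.ext <| by dsimp only; exact restrict_blockEnd_left hc _ _ _)
    (Units.ext <| by rw [IsUnit.unit_spec]; exact restrict_blockEnd_right hc _ _ _)

end Fitting

section Frames

open Submodule

variable (K : Type*) {V ι κ : Type*} [Field K] [AddCommGroup V] [Module K V]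

noncomputable def splitSpans (s : ι ⊕ κ → V) : Submodule K V × Submodule K V :=
  (span K (Set.range (s ∘ Sum.inl)), span K (Set.range (s ∘ Sum.inr)))

variable {K} [Fintype ι] [Fintype κ] {U W : Submodule K V}

noncomputable def linearIndependentSpanEquiv [FiniteDimensional K V] (hU : finrank K U = Fintype.card ι) :
    {a : ι → V // LinearIndependent K a ∧ span K (Set.range a) = U} ≃
      {a : ι → U // LinearIndependent K a} where
  toFun a := ⟨fun i => ⟨a.1 i, a.2.2.le (subset_span (Set.mem_range_self i))⟩,
    .of_comp U.subtype a.2.1⟩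
  invFun a := ⟨U.subtype ∘ a, a.2.map' U.subtype (ker_subtype U), by
    refine eq_of_le_of_finrank_eq ?_ ?_
    · rw [span_le]
      rintro _ ⟨i, rfl⟩
      exact (a.1 i).2
    · rw [finrank_span_eq_card (a.2.map' U.subtype (ker_subtype U)), hU]⟩
  left_inv _ := rfl
  right_inv _ := rfl

noncomputable def splitSpansFiberEquiv [FiniteDimensional K V] (hc : IsCompl U W) (hU : finrank K U = Fintype.card ι)
    (hW : finrank K W = Fintype.card κ) :
    {s : {s : ι ⊕ κ → V // LinearIndependent K s} // splitSpans K s.1 = (U, W)} ≃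
      {a : ι → U // LinearIndependent K a} × {b : κ → W // LinearIndependent K b} :=
  (Equiv.subtypeSubtypeEquivSubtypeInter (fun s => LinearIndependent K s)
      fun s => splitSpans K s = (U, W)).trans <|
    ((Equiv.sumArrowEquivProdArrow ι κ V).subtypeEquiv fun s => by
      rw [linearIndependent_sum, splitSpans, Prod.mk.injEq]
      constructor
      · rintro ⟨⟨h₁, h₂, -⟩, rfl, rfl⟩
        exact ⟨⟨h₁, rfl⟩, h₂, rfl⟩
      · rintro ⟨⟨h₁, rfl⟩, h₂, rfl⟩
        exact ⟨⟨h₁, h₂, hc.disjoint⟩, rfl, rfl⟩).trans <|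
    Equiv.subtypeProdEquivProd.trans <|
      (linearIndependentSpanEquiv hU).prodCongr (linearIndependentSpanEquiv hW)

lemma isCompl_splitSpans [FiniteDimensional K V] {s : ι ⊕ κ → V} (hs : LinearIndependent K s)
    (hdim : Fintype.card ι + Fintype.card κ = finrank K V) :
    IsCompl (splitSpans K s).1 (splitSpans K s).2 ∧
      finrank K (splitSpans K s).1 = Fintype.card ι := by
  obtain ⟨hl, hr, hd⟩ := linearIndependent_sum.1 hs
  refine ⟨(isCompl_iff_disjoint _ _ ?_).2 hd, finrank_span_eq_card hl⟩
  rw [splitSpans, finrank_span_eq_card hl, finrank_span_eq_card hr, hdim]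

end Frames

section Counting

open Finset

variable (K : Type*) [Field K]

noncomputable def nilCount (n : ℕ) : ℕ :=
  Nat.card {A : Matrix (Fin n) (Fin n) K // IsNilpotent A}

variable (V : Type*) [AddCommGroup V] [Module K V]

noncomputable def complPairCount (k : ℕ) : ℕ :=
  Nat.card {p : Submodule K V × Submodule K V // IsCompl p.1 p.2 ∧ finrank K p.1 = k}

variable {K V}

lemma card_isNilpotent_end [FiniteDimensional K V] :
    Nat.card {g : End K V // IsNilpotent g} = nilCount K (finrank K V) :=
  Nat.card_congr <| (algEquivMatrix (finBasis K V)).toEquiv.subtypeEquiv fun _ =>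
    (IsNilpotent.map_iff (algEquivMatrix (finBasis K V)).injective).symm

lemma card_units_end [Fintype K] [FiniteDimensional K V] :
    Nat.card (End K V)ˣ = glCard (Fintype.card K) (finrank K V) := by
  rw [Nat.card_congr (Units.mapEquiv (algEquivMatrix (finBasis K V)).toMulEquiv).toEquiv]
  exact Matrix.card_GL_field _

variable [Finite V]

open Classical in
lemma card_eq_sum_complPairCount {α : Type*} [Finite α]
    (φ : α → Submodule K V × Submodule K V) (c : ℕ → ℕ)
    (hφ : ∀ p, Nat.card {a // φ a = p} = if IsCompl p.1 p.2 then c (finrank K p.1) else 0) :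
    Nat.card α = ∑ k ∈ range (finrank K V + 1), complPairCount K V k * c k := by
  have : Fintype (Submodule K V × Submodule K V) := Fintype.ofFinite _
  rw [← Nat.card_congr (Equiv.sigmaFiberEquiv φ), Nat.card_sigma]
  calc ∑ p, Nat.card {a // φ a = p}
      = ∑ p : Submodule K V × Submodule K V, ∑ k ∈ range (finrank K V + 1),
          if IsCompl p.1 p.2 ∧ finrank K p.1 = k then c k else 0 := by
        refine sum_congr rfl fun p _ => ?_
        rw [hφ]
        split_ifs with hc
        · simp [hc, Nat.lt_succ_of_le (Submodule.finrank_le p.1)]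
        · simp [hc]
    _ = ∑ k ∈ range (finrank K V + 1), complPairCount K V k * c k := by
        rw [sum_comm]
        refine sum_congr rfl fun k _ => ?_
        rw [← sum_filter, sum_const, smul_eq_mul, complPairCount, Nat.card_eq_fintype_card,
          Fintype.card_subtype]

open Classical in
lemma card_fittingPair_fiber [Fintype K] (p : Submodule K V × Submodule K V) :
    Nat.card {f : End K V // fittingPair f = p} =
      if IsCompl p.1 p.2 then
        nilCount K (finrank K p.1) * glCard (Fintype.card K) (finrank K V - finrank K p.1)
      else 0 := by
  obtain ⟨U, W⟩ := p
  split_ifs with hc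
  · rw [Nat.card_congr (fittingFiberEquiv hc), Nat.card_prod, card_isNilpotent_end,
      card_units_end, ← Submodule.finrank_add_eq_of_isCompl hc, Nat.add_sub_cancel_left]
  · rw [Nat.card_eq_zero]
    exact Or.inl ⟨fun f => hc (f.2 ▸ isCompl_fittingPair f.1)⟩

lemma pow_finrank_mul_finrank_eq_sum_nilCount [Fintype K] :
    Fintype.card K ^ (finrank K V * finrank K V) = ∑ k ∈ range (finrank K V + 1),
      complPairCount K V k * (nilCount K k * glCard (Fintype.card K) (finrank K V - k)) := by
  have : Finite (End K V) := Module.finite_of_finite K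
  rw [← Module.finrank_linearMap, ← Nat.card_eq_fintype_card (α := K),
    ← Module.natCard_eq_pow_finrank]
  simpa only [Nat.card_eq_fintype_card] using card_eq_sum_complPairCount fittingPair
    (fun k => nilCount K k * glCard (Fintype.card K) (finrank K V - k)) card_fittingPair_fiber

lemma card_linearIndependent_eq_glCard [Fintype K] {k : ℕ} (hk : finrank K V = k) :
    Nat.card {a : Fin k → V // LinearIndependent K a} = glCard (Fintype.card K) k := by
  subst hk
  exact card_linearIndependent le_rfl

lemma card_linearIndependent_sum [Fintype K] {k m : ℕ} (hkm : k + m = finrank K V) :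
    Nat.card {s : Fin k ⊕ Fin m → V // LinearIndependent K s} =
      glCard (Fintype.card K) (k + m) := by
  rw [← card_linearIndependent_eq_glCard hkm.symm]
  exact Nat.card_congr <| (Equiv.arrowCongr finSumFinEquiv (Equiv.refl V)).subtypeEquiv fun _ =>
    (linearIndependent_equiv finSumFinEquiv.symm).symm

open Classical in
lemma complPairCount_mul_glCard [Fintype K] {k m : ℕ} (hkm : k + m = finrank K V) :
    complPairCount K V k * (glCard (Fintype.card K) k * glCard (Fintype.card K) m) =
      glCard (Fintype.card K) (finrank K V) := by
  have key := card_eq_sum_complPairCount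
    (fun s : {s : Fin k ⊕ Fin m → V // LinearIndependent K s} => splitSpans K s.1)
    (fun j => if j = k then glCard (Fintype.card K) k * glCard (Fintype.card K) m else 0) ?_
  · rw [card_linearIndependent_sum hkm, hkm] at key
    simp only [mul_ite, mul_zero, sum_ite_eq', mem_range] at key
    rw [key, if_pos (by omega)]
  rintro ⟨U, W⟩
  by_cases h : IsCompl U W ∧ finrank K U = k
  · obtain ⟨hc, hU⟩ := h
    have hW : finrank K W = m := by
      have := Submodule.finrank_add_eq_of_isCompl hc
      omega
    rw [if_pos hc, if_pos hU, Nat.card_congr (splitSpansFiberEquiv hc (by simpa using hU)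
      (by simpa using hW)), Nat.card_prod, card_linearIndependent_eq_glCard hU,
      card_linearIndependent_eq_glCard hW]
  · rw [Nat.card_eq_zero.2 (Or.inl ?_)]
    · split_ifs <;> simp_all
    refine ⟨fun ⟨⟨s, hs⟩, hsUW⟩ => h ?_⟩
    obtain ⟨rfl, rfl⟩ := Prod.ext_iff.1 hsUW
    simpa using isCompl_splitSpans hs (by simpa using hkm)

lemma complPairCount_finrank [Fintype K] : complPairCount K V (finrank K V) = 1 := by
  have h := complPairCount_mul_glCard (K := K) (V := V) (add_zero (finrank K V))
  rw [glCard_zero, mul_one] at h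
  exact (Nat.mul_eq_right (glCard_pos Fintype.one_lt_card _).ne').1 h

lemma sum_complPairCount_mul_pow_mul_glCard [Fintype K] :
    ∑ k ∈ range (finrank K V + 1), complPairCount K V k *
        (Fintype.card K ^ (k * (k - 1)) * glCard (Fintype.card K) (finrank K V - k)) =
      Fintype.card K ^ (finrank K V * finrank K V) := by
  have hq : 2 ≤ Fintype.card K := Fintype.one_lt_card
  have hterm (k : ℕ) (hk : k ∈ range (finrank K V + 1)) :
      ((complPairCount K V k *
        (Fintype.card K ^ (k * (k - 1)) * glCard (Fintype.card K) (finrank K V - k)) : ℕ) : ℚ) =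
        glCard (Fintype.card K) (finrank K V) *
          ((Fintype.card K : ℚ) ^ (k * (k - 1)) / glCard (Fintype.card K) k) := by
    have hG : (glCard (Fintype.card K) k : ℚ) ≠ 0 := by exact_mod_cast (glCard_pos hq k).ne'
    rw [← complPairCount_mul_glCard (K := K) (V := V) (k := k) (m := finrank K V - k)
      (by rw [mem_range] at hk; omega)]
    push_cast
    field_simp
  have hsum := glCard_mul_sum_pow_div_glCard hq (finrank K V)
  rw [mul_sum, ← sum_congr rfl hterm] at hsum
  exact_mod_cast hsum

theorem nilCount_eq [Fintype K] (n : ℕ) : nilCount K n = Fintype.card K ^ (n * (n - 1)) := by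
  induction n using Nat.strong_induction_on with
  | _ n ih =>
  have hend := pow_finrank_mul_finrank_eq_sum_nilCount (K := K) (V := Fin n → K)
  have hpow := sum_complPairCount_mul_pow_mul_glCard (K := K) (V := Fin n → K)
  have htop := complPairCount_finrank (K := K) (V := Fin n → K)
  rw [Module.finrank_fin_fun] at hend hpow htop
  rw [sum_range_succ, sum_congr rfl fun k hk => by rw [ih k (mem_range.1 hk)], htop,
    Nat.sub_self, glCard_zero] at hend
  rw [sum_range_succ, htop, Nat.sub_self, glCard_zero] at hpow
  omega

end Counting

theorem stmt5_general (F : Type*) [Field F] [Fintype F] (q n : ℕ) (hq : Fintype.card F = q) :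
    Nat.card {A : Matrix (Fin n) (Fin n) F // IsNilpotent A} = q ^ (n * (n - 1)) :=
  hq ▸ nilCount_eq n

theorem stmt5 (F : Type*) [Field F] [Fintype F] (q n : ℕ) (hq : Fintype.card F = q)
    (hn : 0 < n) :
    Nat.card {A : Matrix (Fin n) (Fin n) F // IsNilpotent A} = q ^ (n * (n - 1)) :=
  stmt5_general F q n hq
end

section
/- Let V be an n-dimensional vector space over F_q, W a k-dimensional subspace, and U a fixed d-dimensional subspace of W. The number of linear transformations T : W \to V whose maximal T-invariant subspace contained in W equals U is q^{d^2} \prod_{i=d+1}^{k} (q^n - q^i). -/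
open Finset Module

/-- The maximal `T`-invariant subspace contained in `W`, for a linear map `T : W → V`
defined on the subspace `W` of `V`: the sum of all subspaces `U ⊆ W` with `T(U) ⊆ U`. -/
def invSub {F V : Type*} [Field F] [AddCommGroup V] [Module F V] (W : Submodule F V)
    (T : W →ₗ[F] V) : Submodule F V :=
  sSup {U : Submodule F V | U ≤ W ∧ ∀ x : W, (x : V) ∈ U → T x ∈ U}

/-!
Write `c(U)` for the number of `T : W → V` with `invSub W T = U`, and `d = dim U`. A map with
`T(U) ⊆ U` amounts to its restriction `U → U`, the induced map `W/U → V/U` and an arbitrary map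
`W/U → U`; and `invSub W T = U` exactly when the induced map has no nonzero invariant subspace
inside `W/U ⊆ V/U`. Hence `c(U) = q^{dk} c₀(n - d, k - d)`, where `c₀(n, k)` counts the maps
with `invSub = ⊥`. Every map has some `invSub`, so `∑_{U ≤ W} c(U) = q^{nk}`. There are
`[k, d]_q` subspaces of dimension `d`, and `∑_d [k, d]_q q^{d²} ∏_{i=d+1}^{k} (q^n - q^i) = q^{nk}`;
comparing the two sums, strong induction on `k` gives `c₀(n, k) = ∏_{i=1}^{k} (q^n - q^i)`.
-/

instance Submodule.finite_of_finite {R M : Type*} [Semiring R] [AddCommMonoid M] [Module R M]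
    [Finite M] : Finite (Submodule R M) :=
  Finite.of_injective _ SetLike.coe_injective

lemma Nat.card_eq_mul_of_card_fiber {α β : Type*} [Finite α] [Finite β] (g : α → β)
    {c : ℕ} (h : ∀ b, Nat.card {a // g a = b} = c) : Nat.card α = Nat.card β * c := by
  have := Fintype.ofFinite β
  rw [← Nat.card_congr (Equiv.sigmaFiberEquiv g), Nat.card_sigma]
  simp [h, Nat.card_eq_fintype_card]

lemma LinearMap.card_preimage_of_surjective {R G H : Type*} [Ring R] [AddCommGroup G]
    [Module R G] [AddCommGroup H] [Module R H] {φ : G →ₗ[R] H} (hφ : Function.Surjective φ)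
    (A : Set H) : Nat.card (φ ⁻¹' A) = Nat.card A * Nat.card (ker φ) := by
  let s := Function.surjInv hφ
  have hs : ∀ h, φ (s h) = h := Function.surjInv_eq hφ
  let e : φ ⁻¹' A ≃ A × ker φ :=
    { toFun g := (⟨φ g, g.2⟩, ⟨g - s (φ g), by simp [hs]⟩)
      invFun p := ⟨s p.1 + p.2, by simp [hs, mem_ker.1 p.2.2]⟩
      left_inv g := by simp
      right_inv p := by ext <;> simp [hs, mem_ker.1 p.2.2] }
  rw [Nat.card_congr e, Nat.card_prod]

lemma Module.card_linearMap (F A B : Type*) [Field F] [Fintype F] [AddCommGroup A] [Module F A]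
    [FiniteDimensional F A] [AddCommGroup B] [Module F B] [FiniteDimensional F B] :
    Nat.card (A →ₗ[F] B) = Fintype.card F ^ (finrank F A * finrank F B) := by
  have := Module.finite_of_finite F (M := A →ₗ[F] B)
  have := Fintype.ofFinite (A →ₗ[F] B)
  rw [Nat.card_eq_fintype_card, card_eq_pow_finrank (K := F), finrank_linearMap]

/-- Complements of `p` form a torsor under `Hom(E ⧸ p, p)`, via their projections onto `p`. -/
lemma Submodule.card_isCompl {K E : Type*} [DivisionRing K] [AddCommGroup E] [Module K E]
    (p : Submodule K E) : Nat.card {q // IsCompl p q} = Nat.card ((E ⧸ p) →ₗ[K] p) := by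
  obtain ⟨c, hc⟩ := p.exists_isCompl
  let f₀ := p.projectionOnto c hc
  have hf₀ (x : p) : f₀ x = x := p.projectionOnto_apply_left hc x
  let e : {f : E →ₗ[K] p // ∀ x : p, f x = x} ≃ ((E ⧸ p) →ₗ[K] p) :=
    { toFun f := p.liftQ (f.1 - f₀) fun x hx => by simp [f.2 ⟨x, hx⟩, hf₀ ⟨x, hx⟩]
      invFun g := ⟨g ∘ₗ p.mkQ + f₀, fun x => by
        simp [hf₀, (Quotient.mk_eq_zero p).2 x.2]⟩
      left_inv f := by ext; simp
      right_inv g := by ext; simp }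
  exact Nat.card_congr (p.isComplEquivProj.trans e)

/-- The Gaussian binomial coefficient `[k, d]_q`, by the `q`-Pascal recursion. -/
def qBinom (q : ℕ) : ℕ → ℕ → ℕ
  | _, 0 => 1
  | 0, _ + 1 => 0
  | k + 1, d + 1 => qBinom q k d + q ^ (d + 1) * qBinom q k (d + 1)

@[simp] lemma qBinom_zero_right (q k : ℕ) : qBinom q k 0 = 1 := by cases k <;> rfl

lemma qBinom_succ_succ (q k d : ℕ) :
    qBinom q (k + 1) (d + 1) = qBinom q k d + q ^ (d + 1) * qBinom q k (d + 1) := rfl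

lemma qBinom_eq_zero_of_lt (q : ℕ) : ∀ {k d : ℕ}, k < d → qBinom q k d = 0
  | 0, _ + 1, _ => rfl
  | k + 1, d + 1, h => by
    simp [qBinom_succ_succ, qBinom_eq_zero_of_lt q (by omega : k < d),
      qBinom_eq_zero_of_lt q (by omega : k < d + 1)]

lemma sum_qBinom_succ_mul (q k : ℕ) (x : ℕ → ℤ) :
    ∑ d ∈ range (k + 1 + 1), (qBinom q (k + 1) d : ℤ) * x d =
      ∑ d ∈ range (k + 1), (qBinom q k d : ℤ) * (x (d + 1) + (q : ℤ) ^ d * x d) := by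
  let g (d : ℕ) : ℤ := (q : ℤ) ^ d * qBinom q k d * x d
  calc ∑ d ∈ range (k + 1 + 1), (qBinom q (k + 1) d : ℤ) * x d
      = ∑ d ∈ range (k + 1), (qBinom q k d : ℤ) * x (d + 1) +
          (∑ d ∈ range (k + 1), g (d + 1) + g 0) := by
        simp only [sum_range_succ' _ (k + 1), qBinom_succ_succ, g]
        push_cast
        simp [add_mul, sum_add_distrib, mul_assoc, add_assoc]
      _ = ∑ d ∈ range (k + 1), (qBinom q k d : ℤ) * x (d + 1) +
          ∑ d ∈ range (k + 1), g d := by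
        rw [← sum_range_succ', sum_range_succ _ (k + 1)]
        simp [g, qBinom_eq_zero_of_lt]
      _ = _ := by
        rw [← sum_add_distrib]
        exact sum_congr rfl fun d _ => by ring

lemma prod_Icc_pow_sub_pow_add {R : Type*} [CommRing R] (c : R) (n m a b : ℕ) :
    ∏ i ∈ Icc (a + m) (b + m), (c ^ (n + m) - c ^ i) =
      c ^ (m * (b + 1 - a)) * ∏ i ∈ Icc a b, (c ^ n - c ^ i) := by
  rw [← map_add_right_Icc, prod_map, pow_mul, ← Nat.card_Icc, ← prod_const,
    ← prod_mul_distrib]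
  refine prod_congr rfl fun i _ => ?_
  simp only [addRightEmbedding_apply]
  ring

theorem sum_qBinom_mul_prod (q : ℕ) {k n : ℕ} (h : k ≤ n) :
    ∑ d ∈ range (k + 1), (qBinom q k d : ℤ) * (q : ℤ) ^ (d ^ 2) *
        ∏ i ∈ Icc (d + 1) k, ((q : ℤ) ^ n - (q : ℤ) ^ i) = (q : ℤ) ^ (n * k) := by
  induction k generalizing n with
  | zero => simp
  | succ k ih =>
    obtain ⟨m, rfl⟩ : ∃ m, n = m + 1 := ⟨n - 1, by omega⟩
    set c : ℤ := (q : ℤ)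
    let Q (d : ℕ) : ℤ := ∏ i ∈ Icc (d + 1) k, (c ^ m - c ^ i)
    have hterm (d : ℕ) (hd : d ≤ k) :
        c ^ ((d + 1) ^ 2) * ∏ i ∈ Icc (d + 1 + 1) (k + 1), (c ^ (m + 1) - c ^ i) +
          c ^ d * (c ^ (d ^ 2) * ∏ i ∈ Icc (d + 1) (k + 1), (c ^ (m + 1) - c ^ i)) =
        c ^ (m + 1 + k) * (c ^ (d ^ 2) * Q d) := by
      have hshift :
          ∏ i ∈ Icc (d + 1 + 1) (k + 1), (c ^ (m + 1) - c ^ i) = c ^ (k - d) * Q d := by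
        rw [← one_mul (k - d), ← Nat.add_sub_add_right k 1 d]
        exact prod_Icc_pow_sub_pow_add c m 1 (d + 1) k
      have hk : c ^ k = c ^ d * c ^ (k - d) := by rw [← pow_add, Nat.add_sub_cancel' hd]
      rw [← mul_prod_Ioc_eq_prod_Icc (by omega : d + 1 ≤ k + 1), ← Icc_add_one_left_eq_Ioc,
        hshift]
      linear_combination (-(c ^ (d ^ 2 + m + 1) * Q d)) * hk
    simp only [mul_assoc]
    rw [sum_qBinom_succ_mul]
    refine (sum_congr rfl fun d hd => by rw [hterm d (Nat.lt_succ_iff.1 (mem_range.1 hd))]).trans ?_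
    simp_rw [mul_left_comm _ (c ^ (m + 1 + k)), ← mul_sum, ← mul_assoc]
    rw [ih (by omega)]
    ring

section SubspaceCount

open Submodule

variable {K X : Type*} [Field K] [AddCommGroup X] [Module K X] [FiniteDimensional K X]

lemma Submodule.finrank_map_mkQ_add_finrank_inf (L p : Submodule K X) :
    finrank K (p.map L.mkQ) + finrank K ↥(p ⊓ L) = finrank K p := by
  have h := LinearMap.finrank_range_add_finrank_ker (L.mkQ ∘ₗ p.subtype)
  rwa [LinearMap.range_comp, range_subtype, LinearMap.ker_comp, ker_mkQ,
    ← finrank_map_subtype_eq, map_comap_subtype] at h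

lemma card_finrank_eq_zero : Nat.card {U : Submodule K X // finrank K U = 0} = 1 := by
  simp [Submodule.finrank_eq_zero]

variable {v : X} (hv : v ≠ 0)
include hv

lemma finrank_map_mkQ_span_singleton {U : Submodule K X} (h : v ∈ U) :
    finrank K (U.map (K ∙ v).mkQ) + 1 = finrank K U := by
  have := finrank_map_mkQ_add_finrank_inf (K ∙ v) U
  rwa [inf_eq_right.2 ((span_singleton_le_iff_mem v U).2 h), finrank_span_singleton hv] at this

lemma finrank_map_mkQ_span_singleton_of_notMem {U : Submodule K X} (h : v ∉ U) :
    finrank K (U.map (K ∙ v).mkQ) = finrank K U := by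
  have := finrank_map_mkQ_add_finrank_inf (K ∙ v) U
  rwa [disjoint_iff.1 ((disjoint_span_singleton' hv).2 h), finrank_bot, add_zero] at this

lemma card_finrank_eq_succ_of_mem (d : ℕ) :
    Nat.card {U : Submodule K X // finrank K U = d + 1 ∧ v ∈ U} =
      Nat.card {U : Submodule K (X ⧸ K ∙ v) // finrank K U = d} := by
  refine Nat.card_congr
    { toFun U := ⟨U.1.map (K ∙ v).mkQ, by
        have := finrank_map_mkQ_span_singleton hv U.2.2; omega⟩
      invFun U := ⟨U.1.comap (K ∙ v).mkQ, ?_, ?_⟩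
      left_inv U := ?_
      right_inv U := ?_ }
  · have := finrank_map_mkQ_span_singleton hv (U := U.1.comap (K ∙ v).mkQ)
      (by simp [(Quotient.mk_eq_zero _).2 (mem_span_singleton_self v)])
    rw [map_comap_eq_of_surjective (mkQ_surjective _)] at this
    omega
  · simp [(Quotient.mk_eq_zero _).2 (mem_span_singleton_self v)]
  · simp [comap_map_mkQ, (span_singleton_le_iff_mem v U.1).2 U.2.2]
  · simp [map_comap_eq_of_surjective (mkQ_surjective _)]

variable [Fintype K]

lemma card_notMem_map_mkQ_eq (U' : Submodule K (X ⧸ K ∙ v)) :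
    Nat.card {U : Submodule K X // v ∉ U ∧ U.map (K ∙ v).mkQ = U'} =
      Fintype.card K ^ finrank K U' := by
  set P := U'.comap (K ∙ v).mkQ
  have hiff (U : Submodule K X) :
      (v ∉ U ∧ U.map (K ∙ v).mkQ = U') ↔ Disjoint (K ∙ v) U ∧ (K ∙ v) ⊔ U = P := by
    rw [← disjoint_span_singleton' hv, disjoint_comm, ← comap_map_mkQ]
    refine and_congr_right fun _ => ⟨fun h => h ▸ rfl, fun h => ?_⟩
    simpa [P, map_comap_eq_of_surjective (mkQ_surjective _)] using congrArg (map (K ∙ v).mkQ) h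
  -- the fibre consists of the complements of `K ∙ v` in `P`
  let L₀ : Set.Iic P := ⟨K ∙ v, le_comap_mkQ _ U'⟩
  let L := (mapIic P).symm L₀
  let e₁ : {U : Submodule K X // Disjoint (K ∙ v) U ∧ (K ∙ v) ⊔ U = P} ≃
      {U : Set.Iic P // IsCompl L₀ U} :=
    { toFun U := ⟨⟨U, le_sup_right.trans U.2.2.le⟩, Set.Iic.isCompl_iff.2 U.2⟩
      invFun U := ⟨U.1, Set.Iic.isCompl_iff.1 U.2⟩ }
  let e : {U : Submodule K X // v ∉ U ∧ U.map (K ∙ v).mkQ = U'} ≃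
      {U : Submodule K P // IsCompl L U} :=
    ((Equiv.subtypeEquivRight hiff).trans e₁).trans <|
      Equiv.subtypeEquiv (mapIic P).symm.toEquiv fun _ => (mapIic P).symm.isCompl_iff
  have hL : finrank K L = 1 := by
    have : L.map P.subtype = K ∙ v := congrArg Subtype.val ((mapIic P).apply_symm_apply _)
    rw [← finrank_map_subtype_eq, this, finrank_span_singleton hv]
  have hP : finrank K U' + 1 = finrank K P := by
    have := finrank_map_mkQ_span_singleton hv (U := P)
      (le_comap_mkQ _ U' (mem_span_singleton_self v))
    rwa [map_comap_eq_of_surjective (mkQ_surjective _)] at this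
  have hPL := finrank_quotient_add_finrank L
  rw [Nat.card_congr e, card_isCompl, card_linearMap, hL, mul_one]
  congr 1
  omega

lemma card_finrank_eq_succ_of_notMem (d : ℕ) :
    Nat.card {U : Submodule K X // finrank K U = d + 1 ∧ v ∉ U} =
      Nat.card {U : Submodule K (X ⧸ K ∙ v) // finrank K U = d + 1} *
        Fintype.card K ^ (d + 1) := by
  have := Module.finite_of_finite K (M := X)
  have := Module.finite_of_finite K (M := X ⧸ K ∙ v)
  refine Nat.card_eq_mul_of_card_fiber (fun U => ⟨U.1.map (K ∙ v).mkQ,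
    (finrank_map_mkQ_span_singleton_of_notMem hv U.2.2).trans U.2.1⟩) fun U' => ?_
  calc _ = Nat.card {U : Submodule K X // v ∉ U ∧ U.map (K ∙ v).mkQ = U'.1} := Nat.card_congr
          { toFun U := ⟨U.1.1, U.1.2.2, congrArg Subtype.val U.2⟩
            invFun U := ⟨⟨U.1, by
              rw [← finrank_map_mkQ_span_singleton_of_notMem hv U.2.1, U.2.2, U'.2], U.2.1⟩,
              Subtype.ext U.2.2⟩
            left_inv U := rfl
            right_inv U := rfl }
    _ = _ := by rw [card_notMem_map_mkQ_eq hv, U'.2]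

lemma card_finrank_eq_succ (d : ℕ) :
    Nat.card {U : Submodule K X // finrank K U = d + 1} =
      Nat.card {U : Submodule K (X ⧸ K ∙ v) // finrank K U = d} +
        Nat.card {U : Submodule K (X ⧸ K ∙ v) // finrank K U = d + 1} *
          Fintype.card K ^ (d + 1) := by
  classical
  have := Module.finite_of_finite K (M := X)
  rw [← card_finrank_eq_succ_of_mem hv, ← card_finrank_eq_succ_of_notMem hv, ← Nat.card_sum]
  exact Nat.card_congr <|
    (Equiv.sumCompl fun U : {U : Submodule K X // finrank K U = d + 1} => v ∈ U.1).symm.trans <|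
    Equiv.sumCongr (Equiv.subtypeSubtypeEquivSubtypeInter _ (v ∈ ·))
      (Equiv.subtypeSubtypeEquivSubtypeInter _ (v ∉ ·))

omit hv

variable (K X) in
theorem card_submodule_finrank_eq (d : ℕ) :
    Nat.card {U : Submodule K X // finrank K U = d} = qBinom (Fintype.card K) (finrank K X) d := by
  induction hk : finrank K X generalizing X d with
  | zero =>
    cases d with
    | zero => exact card_finrank_eq_zero
    | succ d =>
      have : IsEmpty {U : Submodule K X // finrank K U = d + 1} :=
        ⟨fun U => by have := U.1.finrank_le; omega⟩
      exact Nat.card_of_isEmpty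
  | succ k ih =>
    cases d with
    | zero => exact card_finrank_eq_zero
    | succ d =>
      have := Module.nontrivial_of_finrank_eq_succ hk
      obtain ⟨v, hv⟩ := exists_ne (0 : X)
      have hkq : finrank K (X ⧸ K ∙ v) = k := by
        have := finrank_quotient_add_finrank (K ∙ v)
        rw [finrank_span_singleton hv] at this
        omega
      rw [card_finrank_eq_succ hv, ih _ _ hkq, ih _ _ hkq, qBinom_succ_succ, mul_comm]

variable (K) in
lemma sum_finrank_eq_sum_qBinom {X M : Type*} [AddCommGroup X] [Module K X]
    [FiniteDimensional K X] [Fintype (Submodule K X)] [AddCommMonoid M] (φ : ℕ → M) :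
    ∑ U : Submodule K X, φ (finrank K U) =
      ∑ d ∈ range (finrank K X + 1), qBinom (Fintype.card K) (finrank K X) d • φ d := by
  classical
  rw [← sum_fiberwise_of_maps_to (g := fun U : Submodule K X => finrank K U)
    (t := range (finrank K X + 1)) fun U _ => mem_range.2 (Nat.lt_succ_of_le U.finrank_le)]
  refine sum_congr rfl fun d _ => ?_
  rw [sum_congr rfl fun U hU => by rw [(mem_filter.1 hU).2], sum_const,
    ← card_submodule_finrank_eq, Nat.card_eq_fintype_card, Fintype.card_subtype]

end SubspaceCount

section RestrictMapQ

open Submodule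

variable {K M N : Type*} [Field K] [AddCommGroup M] [Module K M] [AddCommGroup N] [Module K N]
  (p : Submodule K M) (q : Submodule K N)

def restrictMapQ : compatibleMaps p q →ₗ[K] (p →ₗ[K] q) × (M ⧸ p →ₗ[K] N ⧸ q) :=
  LinearMap.prod
    { toFun f := f.1.restrict fun _ hx => f.2 hx
      map_add' _ _ := rfl
      map_smul' _ _ := rfl }
    (mapQLinear p q)

@[simp] lemma restrictMapQ_fst_apply (f : compatibleMaps p q) (x : p) :
    ((restrictMapQ p q f).1 x : N) = f.1 x := rfl

@[simp] lemma restrictMapQ_snd_mk (f : compatibleMaps p q) (x : M) :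
    (restrictMapQ p q f).2 (Submodule.Quotient.mk x) = Submodule.Quotient.mk (f.1 x) := rfl

lemma restrictMapQ_surjective : Function.Surjective (restrictMapQ p q) := by
  rintro ⟨S, R⟩
  obtain ⟨c, hc⟩ := p.exists_isCompl
  obtain ⟨σ, hσ⟩ := q.mkQ.exists_rightInverse_of_surjective q.range_mkQ
  let f := q.subtype ∘ₗ S ∘ₗ p.projectionOnto c hc + σ ∘ₗ R ∘ₗ p.mkQ
  have hf : f ∈ compatibleMaps p q := fun x hx => by
    simp [f, (Quotient.mk_eq_zero p).2 hx]
  refine ⟨⟨f, hf⟩, Prod.ext ?_ ?_⟩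
  · ext x
    simp [f, (Quotient.mk_eq_zero p).2 x.2, projectionOnto_apply_left hc x]
  · refine linearMap_qext _ (LinearMap.ext fun x => ?_)
    have hσx : Submodule.Quotient.mk (σ (R (Submodule.Quotient.mk x))) =
        R (Submodule.Quotient.mk x) :=
      LinearMap.congr_fun hσ _
    simp [f, hσx, (Quotient.mk_eq_zero q).2 (S _).2]

lemma card_ker_restrictMapQ :
    Nat.card (LinearMap.ker (restrictMapQ p q)) = Nat.card (M ⧸ p →ₗ[K] q) := by
  have hq (f : LinearMap.ker (restrictMapQ p q)) (x : M) : f.1.1 x ∈ q := by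
    have : (restrictMapQ p q f.1).2 (Submodule.Quotient.mk x) = 0 := by
      rw [LinearMap.mem_ker.1 f.2]; rfl
    rwa [restrictMapQ_snd_mk, Quotient.mk_eq_zero] at this
  have hp (f : LinearMap.ker (restrictMapQ p q)) (x : M) (hx : x ∈ p) : f.1.1 x = 0 := by
    have : ((restrictMapQ p q f.1).1 ⟨x, hx⟩ : N) = 0 := by
      rw [LinearMap.mem_ker.1 f.2]; rfl
    rwa [restrictMapQ_fst_apply] at this
  refine Nat.card_congr
    { toFun f := p.liftQ (f.1.1.codRestrict q (hq f)) fun x hx => by simp [hp f x hx]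
      invFun g := ⟨⟨q.subtype ∘ₗ g ∘ₗ p.mkQ, fun x hx => by
        simp [(Quotient.mk_eq_zero p).2 hx]⟩, ?_⟩
      left_inv f := by ext; simp
      right_inv g := by ext; simp }
  refine Prod.ext (LinearMap.ext fun x => Subtype.ext ?_)
    (linearMap_qext _ (LinearMap.ext fun x => ?_))
  · simp [(Quotient.mk_eq_zero p).2 x.2]
  · simp [(Quotient.mk_eq_zero q).2 (g _).2]

end RestrictMapQ

section InvSub

variable {F V : Type*} [Field F] [AddCommGroup V] [Module F V] (W : Submodule F V)
  (T : W →ₗ[F] V)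

def IsInvSub (U : Submodule F V) : Prop := U ≤ W ∧ ∀ x : W, (x : V) ∈ U → T x ∈ U

variable {W T}

lemma le_invSub {U : Submodule F V} (h : IsInvSub W T U) : U ≤ invSub W T := le_sSup h

lemma invSub_le : invSub W T ≤ W := sSup_le fun _ hU => hU.1

lemma isInvSub_invSub : IsInvSub W T (invSub W T) := by
  refine ⟨invSub_le, fun x hx => ?_⟩
  -- every invariant subspace lies in `{x ∈ W | x, T x ∈ invSub W T}`
  let P : Submodule F W := (invSub W T).comap W.subtype ⊓ (invSub W T).comap T
  have hP : invSub W T ≤ P.map W.subtype := sSup_le fun U hU y hy => by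
    refine ⟨⟨y, hU.1 hy⟩, ⟨le_invSub hU hy, le_invSub hU (hU.2 _ hy)⟩, rfl⟩
  obtain ⟨y, hyP, hyx⟩ := hP hx
  obtain rfl : y = x := Subtype.ext hyx
  exact hyP.2

end InvSub

section Reduction

open Submodule

variable {F V : Type*} [Field F] [AddCommGroup V] [Module F V] (W U : Submodule F V)

noncomputable def quotientEquivMapMkQ : (W ⧸ U.comap W.subtype) ≃ₗ[F] W.map U.mkQ :=
  (quotEquivOfEq _ _ (by rw [LinearMap.ker_comp, ker_mkQ])).trans <|
    (U.mkQ ∘ₗ W.subtype).quotKerEquivRange.trans <|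
      LinearEquiv.ofEq _ _ (by rw [LinearMap.range_comp, range_subtype])

/-- Transports maps out of `W ⧸ U` to maps out of the image of `W` in `V ⧸ U`, a subspace of
`V ⧸ U` and hence a domain on which `invSub` is defined. -/
noncomputable def quotMap :
    (W ⧸ U.comap W.subtype →ₗ[F] V ⧸ U) ≃ₗ[F] (W.map U.mkQ →ₗ[F] V ⧸ U) :=
  (quotientEquivMapMkQ W U).arrowCongr (LinearEquiv.refl F (V ⧸ U))

variable {W U}

lemma quotMap_mapQ_apply (T : W →ₗ[F] V) (hT : T ∈ compatibleMaps (U.comap W.subtype) U)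
    (x : W) :
    quotMap W U (mapQ _ _ T hT) ⟨Submodule.Quotient.mk (x : V), mem_map_of_mem x.2⟩ =
      Submodule.Quotient.mk (T x) := by
  have : (⟨Submodule.Quotient.mk (x : V), mem_map_of_mem x.2⟩ : W.map U.mkQ) =
      quotientEquivMapMkQ W U (Submodule.Quotient.mk x) := rfl
  rw [this, quotMap, LinearEquiv.arrowCongr_apply, LinearEquiv.symm_apply_apply]
  rfl

variable (hUW : U ≤ W) (T : W →ₗ[F] V) (hT : T ∈ compatibleMaps (U.comap W.subtype) U)
include hUW

lemma isInvSub_quotMap_iff (Ub : Submodule F (V ⧸ U)) :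
    IsInvSub (W.map U.mkQ) (quotMap W U (mapQ _ _ T hT)) Ub ↔
      IsInvSub W T (Ub.comap U.mkQ) := by
  have hW : (W.map U.mkQ).comap U.mkQ = W := by rw [comap_map_mkQ, sup_eq_right.2 hUW]
  refine and_congr (by rw [← comap_le_comap_iff_of_surjective (mkQ_surjective U), hW])
    ⟨fun h x hx => ?_, ?_⟩
  · simpa [quotMap_mapQ_apply] using h ⟨_, mem_map_of_mem x.2⟩ hx
  · rintro h ⟨y, hy⟩ hyU
    obtain ⟨x, hx, rfl⟩ := mem_map.1 hy
    have h' : Submodule.Quotient.mk (T ⟨x, hx⟩) ∈ Ub := h ⟨x, hx⟩ hyU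
    rwa [← quotMap_mapQ_apply T hT ⟨x, hx⟩] at h'

lemma invSub_quotMap :
    invSub (W.map U.mkQ) (quotMap W U (mapQ _ _ T hT)) = (invSub W T).map U.mkQ := by
  have hU : U ≤ invSub W T := le_invSub ⟨hUW, fun _ hx => hT hx⟩
  refine le_antisymm ?_ (le_invSub ?_)
  · conv_lhs => rw [← map_comap_eq_of_surjective (mkQ_surjective U) (invSub _ _)]
    exact map_mono (le_invSub ((isInvSub_quotMap_iff hUW T hT _).1 isInvSub_invSub))
  · rw [isInvSub_quotMap_iff hUW, comap_map_mkQ, sup_eq_right.2 hU]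
    exact isInvSub_invSub

lemma invSub_eq_iff_invSub_quotMap_eq_bot :
    invSub W T = U ↔ invSub (W.map U.mkQ) (quotMap W U (mapQ _ _ T hT)) = ⊥ := by
  have hU : U ≤ invSub W T := le_invSub ⟨hUW, fun _ hx => hT hx⟩
  rw [invSub_quotMap hUW, eq_bot_iff, map_le_iff_le_comap, comap_bot, ker_mkQ,
    le_antisymm_iff, and_iff_left hU]

end Reduction

section Counting

open Submodule

variable {F V : Type*} [Field F] [AddCommGroup V] [Module F V] {W U : Submodule F V}

theorem card_invSub_eq_mul (hUW : U ≤ W) :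
    Nat.card {T : W →ₗ[F] V // invSub W T = U} =
      Nat.card (U.comap W.subtype →ₗ[F] U) *
        Nat.card {S : W.map U.mkQ →ₗ[F] V ⧸ U // invSub _ S = ⊥} *
          Nat.card (W ⧸ U.comap W.subtype →ₗ[F] U) := by
  let B : Set (W ⧸ U.comap W.subtype →ₗ[F] V ⧸ U) := {R | invSub _ (quotMap W U R) = ⊥}
  have hT (T : {T : W →ₗ[F] V // invSub W T = U}) :
      T.1 ∈ compatibleMaps (U.comap W.subtype) U :=
    fun x hx => (T.2 ▸ isInvSub_invSub).2 x hx
  let e : {T : W →ₗ[F] V // invSub W T = U} ≃ restrictMapQ _ U ⁻¹' (Set.univ ×ˢ B) :=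
    { toFun T := ⟨⟨T.1, hT T⟩,
        Set.mem_univ _, (invSub_eq_iff_invSub_quotMap_eq_bot hUW T.1 (hT T)).1 T.2⟩
      invFun T := ⟨T.1.1, (invSub_eq_iff_invSub_quotMap_eq_bot hUW T.1.1 T.1.2).2 T.2.2⟩ }
  have hB : Nat.card B = Nat.card {S : W.map U.mkQ →ₗ[F] V ⧸ U // invSub _ S = ⊥} :=
    Nat.card_congr ((quotMap W U).toEquiv.subtypeEquiv fun _ => Iff.rfl)
  rw [Nat.card_congr e, LinearMap.card_preimage_of_surjective (restrictMapQ_surjective _ U),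
    Nat.card_congr (Equiv.Set.prod _ _), Nat.card_prod, Nat.card_univ, hB, card_ker_restrictMapQ]

lemma sum_card_invSub (W : Submodule F V) [Finite (W →ₗ[F] V)] [Fintype (Submodule F W)] :
    ∑ U : Submodule F W, Nat.card {T : W →ₗ[F] V // invSub W T = U.map W.subtype} =
      Nat.card (W →ₗ[F] V) := by
  rw [← Nat.card_congr <|
    Equiv.sigmaFiberEquiv fun T : W →ₗ[F] V => (invSub W T).comap W.subtype, Nat.card_sigma]
  refine sum_congr rfl fun U _ => Nat.card_congr (Equiv.subtypeEquivRight fun T =>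
    ⟨fun h => ?_, fun h => ?_⟩)
  · rw [h, comap_map_eq_of_injective W.injective_subtype]
  · rw [← h, map_comap_subtype, inf_eq_right.2 invSub_le]

variable [Fintype F] [FiniteDimensional F V]

theorem card_invSub_eq_pow_mul (hUW : U ≤ W) :
    Nat.card {T : W →ₗ[F] V // invSub W T = U} = Fintype.card F ^ (finrank F U * finrank F W) *
      Nat.card {S : W.map U.mkQ →ₗ[F] V ⧸ U // invSub _ S = ⊥} := by
  have hd := (comapSubtypeEquivOfLe hUW).finrank_eq
  have hk := finrank_quotient_add_finrank (U.comap W.subtype)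
  rw [card_invSub_eq_mul hUW, card_linearMap, card_linearMap, hd, ← hk, hd]
  ring

theorem card_invSub_eq_of_card_bot (hUW : U ≤ W)
    (hbot : (Nat.card {S : W.map U.mkQ →ₗ[F] V ⧸ U // invSub _ S = ⊥} : ℤ) =
      ∏ i ∈ Icc 1 (finrank F (W.map U.mkQ)),
        ((Fintype.card F : ℤ) ^ finrank F (V ⧸ U) - (Fintype.card F : ℤ) ^ i)) :
    (Nat.card {T : W →ₗ[F] V // invSub W T = U} : ℤ) =
      (Fintype.card F : ℤ) ^ (finrank F U ^ 2) * ∏ i ∈ Icc (finrank F U + 1) (finrank F W),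
        ((Fintype.card F : ℤ) ^ finrank F V - (Fintype.card F : ℤ) ^ i) := by
  have hW := finrank_map_mkQ_add_finrank_inf U W
  rw [inf_eq_right.2 hUW] at hW
  have hV := finrank_quotient_add_finrank U
  rw [card_invSub_eq_pow_mul hUW, Nat.cast_mul, hbot, ← hW, ← hV]
  generalize finrank F (W.map U.mkQ) = a, finrank F (V ⧸ U) = b, finrank F U = d
  have := prod_Icc_pow_sub_pow_add (Fintype.card F : ℤ) b d 1 a
  rw [Nat.add_sub_cancel, add_comm 1 d] at this
  rw [this]
  push_cast
  ring

theorem card_invSub_eq_bot (W : Submodule F V) :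
    (Nat.card {T : W →ₗ[F] V // invSub W T = ⊥} : ℤ) = ∏ i ∈ Icc 1 (finrank F W),
      ((Fintype.card F : ℤ) ^ finrank F V - (Fintype.card F : ℤ) ^ i) := by
  induction hk : finrank F W using Nat.strong_induction_on generalizing V W with
  | _ k ih =>
  have := Module.finite_of_finite F (M := V)
  have := Module.finite_of_finite F (M := W →ₗ[F] V)
  have := Fintype.ofFinite (Submodule F W)
  set q : ℤ := (Fintype.card F : ℤ)
  set n := finrank F V
  let f (d : ℕ) : ℤ := q ^ (d ^ 2) * ∏ i ∈ Icc (d + 1) k, (q ^ n - q ^ i)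
  let c (U : Submodule F W) : ℤ := Nat.card {T : W →ₗ[F] V // invSub W T = U.map W.subtype}
  have htotal : ∑ U, c U = q ^ (n * k) := by
    simp only [c]
    rw [← Nat.cast_sum, sum_card_invSub, card_linearMap, hk]
    push_cast
    ring
  have hformula : ∑ U : Submodule F W, f (finrank F U) = q ^ (n * k) := by
    rw [sum_finrank_eq_sum_qBinom, hk, ← sum_qBinom_mul_prod _ (hk ▸ W.finrank_le)]
    simp [f, q, mul_assoc]
  have hagree (U : Submodule F W) (hU : U ≠ ⊥) : c U = f (finrank F U) := by
    have hUW : U.map W.subtype ≤ W := map_subtype_le W U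
    have hlt : finrank F (W.map (U.map W.subtype).mkQ) < k := by
      have := finrank_map_mkQ_add_finrank_inf (U.map W.subtype) W
      have := Nat.pos_of_ne_zero (finrank_eq_zero.not.2 hU)
      rw [inf_eq_right.2 hUW, finrank_map_subtype_eq] at *
      omega
    simp only [c, f]
    rw [card_invSub_eq_of_card_bot hUW (ih _ hlt _ rfl), finrank_map_subtype_eq, hk]
  -- the two sums agree termwise away from `U = ⊥`
  rw [← add_sum_erase _ _ (mem_univ ⊥), sum_congr rfl fun U hU => hagree U (ne_of_mem_erase hU),
    ← hformula, ← add_sum_erase _ _ (mem_univ ⊥), add_left_inj] at htotal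
  simpa [c, f] using htotal

end Counting

theorem stmt7_general (F V : Type*) [Field F] [Fintype F] [AddCommGroup V] [Module F V]
    [FiniteDimensional F V] (q n k d : ℕ) (hq : Fintype.card F = q)
    (hn : finrank F V = n) (W : Submodule F V) (hk : finrank F W = k)
    (U : Submodule F V) (hUW : U ≤ W) (hd : finrank F U = d) :
    (Nat.card {T : W →ₗ[F] V // invSub W T = U} : ℤ) =
      (q : ℤ) ^ (d ^ 2) * ∏ i ∈ Icc (d + 1) k, ((q : ℤ) ^ n - (q : ℤ) ^ i) := by
  subst hq hn hk hd
  exact card_invSub_eq_of_card_bot hUW (card_invSub_eq_bot _)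

theorem stmt7 (F V : Type*) [Field F] [Fintype F] [AddCommGroup V] [Module F V]
    [FiniteDimensional F V] (q n k d : ℕ) (hq : Fintype.card F = q)
    (hn : finrank F V = n) (W : Submodule F V) (hk : finrank F W = k) (hkn : k ≤ n)
    (U : Submodule F V) (hUW : U ≤ W) (hd : finrank F U = d) :
    (Nat.card {T : W →ₗ[F] V // invSub W T = U} : ℤ) =
      (q : ℤ) ^ (d ^ 2) * ∏ i ∈ Icc (d + 1) k, ((q : ℤ) ^ n - (q : ℤ) ^ i) :=
  stmt7_general F V q n k d hq hn W hk U hUW hd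
end
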